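/- arXiv:2406.08175 — 2 statements merged into one kernel-verified Lean document; each statement's English description precedes it below -/
import Mathlib

section
/- Let M be a finite MDP, M' a subsystem of M, and Φ a multi-objective property that is a Boolean combination of lower-bounded reachability and invariance predicates with strict or non-strict lower bounds. If every scheduler σ' of M' satisfies Φ (all predicates with lower bounds ≥ λ_i, respectively > λ_i), then every scheduler σ of M satisfies Φ. -/
open Finset

structure MDP (S A : Type) [Fintype S] [Fintype A] where
  init : S
  trans : S → A → Option (S → ℝ)
  nonneg' : ∀ s a f, trans s a = some f → ∀ t, 0 ≤ f t
  sum_one' : ∀ s a f, trans s a = some f → ∑ t, f t = 1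
  exists_enabled : ∀ s, ∃ a, (trans s a).isSome

namespace MDP

variable {S A : Type} [Fintype S] [Fintype A]

/-- action `a` is enabled in state `s`. -/
def enabled (M : MDP S A) (s : S) (a : A) : Prop := (M.trans s a).isSome

/-- transition probability (0 if the action is not enabled). -/
noncomputable def prob (M : MDP S A) (s : S) (a : A) (t : S) : ℝ :=
  ((M.trans s a).getD 0) t

/-- A (history-dependent, randomized) scheduler. -/
structure Scheduler (M : MDP S A) where
  choice : List (S × A) → S → A → ℝ
  choice_nonneg : ∀ h s a, 0 ≤ choice h s a
  choice_sum_one : ∀ h s, ∑ a, choice h s a = 1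
  choice_support : ∀ h s a, choice h s a ≠ 0 → M.enabled s a

variable [DecidableEq S]

/-- probability of reaching `G` within `n` steps, from history `h` and current state `s`. -/
noncomputable def reachAux (M : MDP S A) (σ : Scheduler M) (G : Finset S) :
    ℕ → List (S × A) → S → ℝ
  | 0, _, s => if s ∈ G then 1 else 0
  | n + 1, h, s =>
      if s ∈ G then 1
      else ∑ a : A, σ.choice h s a * ∑ t : S, M.prob s a t * reachAux M σ G n (h ++ [(s, a)]) t

/-- probability of eventually reaching `G`, starting in `s`. -/
noncomputable def prReachFrom (M : MDP S A) (σ : Scheduler M) (G : Finset S) (s : S) : ℝ :=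
  ⨆ n : ℕ, reachAux M σ G n [] s

/-- probability of eventually reaching `G` from the initial state. -/
noncomputable def prReach (M : MDP S A) (σ : Scheduler M) (G : Finset S) : ℝ :=
  prReachFrom M σ G M.init

/-- probability of staying in `G` for the first `n` steps. -/
noncomputable def invAux (M : MDP S A) (σ : Scheduler M) (G : Finset S) :
    ℕ → List (S × A) → S → ℝ
  | 0, _, s => if s ∈ G then 1 else 0
  | n + 1, h, s =>
      if s ∈ G then
        ∑ a : A, σ.choice h s a * ∑ t : S, M.prob s a t * invAux M σ G n (h ++ [(s, a)]) t
      else 0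

/-- probability of always remaining in `G`, from the initial state. -/
noncomputable def prInv (M : MDP S A) (σ : Scheduler M) (G : Finset S) : ℝ :=
  ⨅ n : ℕ, invAux M σ G n [] M.init

/-- expected total reward collected in the first `n` steps. -/
noncomputable def expTotal (M : MDP S A) (σ : Scheduler M) (r : S → A → ℝ) :
    ℕ → List (S × A) → S → ℝ
  | 0, _, _ => 0
  | n + 1, h, s =>
      ∑ a : A, σ.choice h s a *
        (r s a + ∑ t : S, M.prob s a t * expTotal M σ r n (h ++ [(s, a)]) t)

/-- expected (liminf) mean payoff under scheduler `σ`. -/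
noncomputable def expMPinf (M : MDP S A) (σ : Scheduler M) (r : S → A → ℝ) : ℝ :=
  Filter.liminf (fun n : ℕ => expTotal M σ r n [] M.init / n) Filter.atTop

/-- expected (limsup) mean payoff under scheduler `σ`. -/
noncomputable def expMPsup (M : MDP S A) (σ : Scheduler M) (r : S → A → ℝ) : ℝ :=
  Filter.limsup (fun n : ℕ => expTotal M σ r n [] M.init / n) Filter.atTop

/-- `M'` (with fresh sink `⊥ = none`) is a subsystem of `M` with state set `S' ∪ {⊥}`. -/
def IsSubsystem (M : MDP S A) (S' : Finset S) (M' : MDP (Option S) A) : Prop :=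
  M.init ∈ S' ∧ M'.init = some M.init ∧
  (∀ a, M'.enabled none a → ∀ t, M'.prob none a t = if t = none then 1 else 0) ∧
  (∀ s ∈ S', ∀ a, (M'.enabled (some s) a ↔ M.enabled s a)) ∧
  (∀ s ∈ S', ∀ t ∈ S', ∀ a,
    M'.prob (some s) a (some t) = M.prob s a t ∨ M'.prob (some s) a (some t) = 0) ∧
  (∀ s ∈ S', ∀ t, t ∉ S' → ∀ a, M'.prob (some s) a (some t) = 0)

/-- `M'` is the subsystem of `M` induced by `S'`: transitions leaving `S'` are
redirected to the absorbing sink `⊥ = none`. -/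
def IsInducedSubsystem (M : MDP S A) (S' : Finset S) (M' : MDP (Option S) A) : Prop :=
  M.init ∈ S' ∧ M'.init = some M.init ∧
  (∀ a, M'.enabled none a → ∀ t, M'.prob none a t = if t = none then 1 else 0) ∧
  (∀ s ∈ S', ∀ a, (M'.enabled (some s) a ↔ M.enabled s a)) ∧
  (∀ s ∈ S', ∀ t ∈ S', ∀ a, M'.prob (some s) a (some t) = M.prob s a t) ∧
  (∀ s ∈ S', ∀ t, t ∉ S' → ∀ a, M'.prob (some s) a (some t) = 0) ∧
  (∀ s ∈ S', ∀ a, M.enabled s a → M'.prob (some s) a none = ∑ t ∈ S'ᶜ, M.prob s a t)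

/-- `C` is an end component of `M`. -/
def IsEC (M : MDP S A) (C : Finset (S × A)) : Prop :=
  C.Nonempty ∧ (∀ p ∈ C, M.enabled p.1 p.2) ∧
  (∀ p ∈ C, ∀ t, 0 < M.prob p.1 p.2 t → t ∈ C.image Prod.fst) ∧
  (∀ s ∈ C.image Prod.fst, ∀ t ∈ C.image Prod.fst,
    Relation.ReflTransGen (fun u v => ∃ a, (u, a) ∈ C ∧ 0 < M.prob u a v) s t)

end MDP

/-- positive boolean combinations of lower-bounded reachability and invariance
predicates; the flag `strict` distinguishes `>` from `≥`. -/
inductive MOProp (S : Type) where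
  | reach (G : Finset S) (lam : ℝ) (strict : Bool)
  | invar (G : Finset S) (lam : ℝ) (strict : Bool)
  | conj (p q : MOProp S)
  | disj (p q : MOProp S)

namespace MDP

variable {S A : Type} [Fintype S] [Fintype A] [DecidableEq S]

/-- satisfaction of a multi-objective property in `M` under `σ`. -/
def Sat (M : MDP S A) (σ : Scheduler M) : MOProp S → Prop
  | .reach G lam strict => if strict then lam < prReach M σ G else lam ≤ prReach M σ G
  | .invar G lam strict => if strict then lam < prInv M σ G else lam ≤ prInv M σ G
  | .conj p q => Sat M σ p ∧ Sat M σ q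
  | .disj p q => Sat M σ p ∨ Sat M σ q

/-- satisfaction of a multi-objective property (over the original state space) in a
subsystem `M'` with sink `⊥ = none`. -/
def SatSub (M' : MDP (Option S) A) (σ : Scheduler M') : MOProp S → Prop
  | .reach G lam strict =>
      if strict then lam < prReach M' σ (G.image some) else lam ≤ prReach M' σ (G.image some)
  | .invar G lam strict =>
      if strict then lam < prInv M' σ (G.image some) else lam ≤ prInv M' σ (G.image some)
  | .conj p q => SatSub M' σ p ∧ SatSub M' σ q
  | .disj p q => SatSub M' σ p ∨ SatSub M' σ q

end MDP

namespace MDPAux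

open MDP

variable {S A : Type} [Fintype S] [Fintype A] [DecidableEq S]

lemma prob_nonneg (M : MDP S A) (s : S) (a : A) (t : S) : 0 ≤ M.prob s a t := by
  unfold MDP.prob
  cases h : M.trans s a with
  | none => simp
  | some f => simpa using M.nonneg' s a f h t

lemma sum_prob_le_one (M : MDP S A) (s : S) (a : A) : ∑ t, M.prob s a t ≤ 1 := by
  unfold MDP.prob
  cases h : M.trans s a with
  | none => simp
  | some f => simp [M.sum_one' s a f h]

lemma reachAux_nonneg (M : MDP S A) (σ : Scheduler M) (G : Finset S) :
    ∀ n h s, 0 ≤ reachAux M σ G n h s := by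
  intro n
  induction n with
  | zero => intro h s; rw [reachAux]; split_ifs <;> norm_num
  | succ n ih =>
    intro h s
    rw [reachAux]
    split_ifs with hG
    · norm_num
    · refine Finset.sum_nonneg fun a _ => mul_nonneg (σ.choice_nonneg _ _ _) ?_
      exact Finset.sum_nonneg fun t _ => mul_nonneg (prob_nonneg M s a t) (ih _ _)

lemma reachAux_le_one (M : MDP S A) (σ : Scheduler M) (G : Finset S) :
    ∀ n h s, reachAux M σ G n h s ≤ 1 := by
  intro n
  induction n with
  | zero => intro h s; rw [reachAux]; split_ifs <;> norm_num
  | succ n ih =>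
    intro h s
    rw [reachAux]
    split_ifs with hG
    · exact le_rfl
    · calc ∑ a : A, σ.choice h s a * ∑ t : S, M.prob s a t * reachAux M σ G n (h ++ [(s, a)]) t
          ≤ ∑ a : A, σ.choice h s a * 1 := by
            refine Finset.sum_le_sum fun a _ => mul_le_mul_of_nonneg_left ?_ (σ.choice_nonneg _ _ _)
            calc ∑ t : S, M.prob s a t * reachAux M σ G n (h ++ [(s, a)]) t
                ≤ ∑ t : S, M.prob s a t * 1 :=
                  Finset.sum_le_sum fun t _ =>
                    mul_le_mul_of_nonneg_left (ih _ _) (prob_nonneg M s a t)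
              _ ≤ 1 := by simpa using sum_prob_le_one M s a
      _ = 1 := by simp [σ.choice_sum_one]

lemma invAux_nonneg (M : MDP S A) (σ : Scheduler M) (G : Finset S) :
    ∀ n h s, 0 ≤ invAux M σ G n h s := by
  intro n
  induction n with
  | zero => intro h s; rw [invAux]; split_ifs <;> norm_num
  | succ n ih =>
    intro h s
    rw [invAux]
    split_ifs with hG
    · refine Finset.sum_nonneg fun a _ => mul_nonneg (σ.choice_nonneg _ _ _) ?_
      exact Finset.sum_nonneg fun t _ => mul_nonneg (prob_nonneg M s a t) (ih _ _)
    · norm_num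

/-- project a history of the subsystem to a history of the original MDP. -/
def projHist (l : List (Option S × A)) : List (S × A) :=
  l.filterMap fun p => p.1.map fun s => (s, p.2)

lemma projHist_append (h : List (Option S × A)) (s : S) (a : A) :
    projHist (h ++ [(some s, a)]) = projHist h ++ [(s, a)] := by
  simp [projHist]

open Classical in
/-- lift a scheduler of `M` to the subsystem `M'`. -/
noncomputable def liftSched (M : MDP S A) (S' : Finset S) (M' : MDP (Option S) A)
    (hen : ∀ s ∈ S', ∀ a, M'.enabled (some s) a ↔ M.enabled s a)
    (σ : Scheduler M) : Scheduler M' where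
  choice h x a :=
    x.elim (if a = (M'.exists_enabled none).choose then 1 else 0)
      fun s => if s ∈ S' then σ.choice (projHist h) s a
        else if a = (M'.exists_enabled (some s)).choose then 1 else 0
  choice_nonneg := by
    intro h x a
    cases x with
    | none => dsimp only [Option.elim]; split_ifs <;> norm_num
    | some s =>
      dsimp only [Option.elim]
      split_ifs
      · exact σ.choice_nonneg _ _ _
      · norm_num
      · norm_num
  choice_sum_one := by
    intro h x
    cases x with
    | none => simp [Option.elim]
    | some s =>
      by_cases hs : s ∈ S'
      · simp [Option.elim, hs, σ.choice_sum_one]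
      · simp [Option.elim, hs]
  choice_support := by
    intro h x a hne
    cases x with
    | none =>
      simp only [Option.elim] at hne
      by_cases hc : a = (M'.exists_enabled none).choose
      · subst hc; exact (M'.exists_enabled none).choose_spec
      · simp [hc] at hne
    | some s =>
      simp only [Option.elim] at hne
      by_cases hs : s ∈ S'
      · rw [if_pos hs] at hne
        exact (hen s hs a).mpr (σ.choice_support _ _ _ hne)
      · rw [if_neg hs] at hne
        by_cases hc : a = (M'.exists_enabled (some s)).choose
        · subst hc; exact (M'.exists_enabled (some s)).choose_spec
        · simp [hc] at hne

lemma liftSched_choice_some (M : MDP S A) (S' : Finset S) (M' : MDP (Option S) A)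
    (hen : ∀ s ∈ S', ∀ a, M'.enabled (some s) a ↔ M.enabled s a)
    (σ : Scheduler M) (h : List (Option S × A)) {s : S} (hs : s ∈ S') (a : A) :
    (liftSched M S' M' hen σ).choice h (some s) a = σ.choice (projHist h) s a := by
  simp [liftSched, hs]

lemma reachAux_none (M' : MDP (Option S) A) (σ' : Scheduler M') (G : Finset S)
    (hsink : ∀ a, M'.enabled none a → ∀ t, M'.prob none a t = if t = none then 1 else 0) :
    ∀ n h, reachAux M' σ' (G.image some) n h none = 0 := by
  intro n
  induction n with
  | zero => intro h; rw [reachAux]; simp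
  | succ n ih =>
    intro h
    rw [reachAux]
    rw [if_neg (by simp)]
    refine Finset.sum_eq_zero fun a _ => ?_
    by_cases hc : σ'.choice h none a = 0
    · simp [hc]
    · have hena := σ'.choice_support h none a hc
      have : ∑ t : Option S, M'.prob none a t *
          reachAux M' σ' (G.image some) n (h ++ [(none, a)]) t = 0 := by
        refine Finset.sum_eq_zero fun t _ => ?_
        rw [hsink a hena t]
        by_cases ht : t = none
        · subst ht; simp [ih]
        · simp [ht]
      simp [this]

lemma invAux_none (M' : MDP (Option S) A) (σ' : Scheduler M') (G : Finset S) :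
    ∀ n h, invAux M' σ' (G.image some) n h none = 0 := by
  intro n
  cases n with
  | zero => intro h; rw [invAux]; simp
  | succ n => intro h; rw [invAux]; simp

lemma reachAux_le (M : MDP S A) (S' : Finset S) (M' : MDP (Option S) A)
    (hsink : ∀ a, M'.enabled none a → ∀ t, M'.prob none a t = if t = none then 1 else 0)
    (hen : ∀ s ∈ S', ∀ a, M'.enabled (some s) a ↔ M.enabled s a)
    (hprob : ∀ s ∈ S', ∀ t ∈ S', ∀ a,
      M'.prob (some s) a (some t) = M.prob s a t ∨ M'.prob (some s) a (some t) = 0)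
    (hout : ∀ s ∈ S', ∀ t, t ∉ S' → ∀ a, M'.prob (some s) a (some t) = 0)
    (σ : Scheduler M) (G : Finset S) :
    ∀ n (h : List (Option S × A)) (s : S), s ∈ S' →
      reachAux M' (liftSched M S' M' hen σ) (G.image some) n h (some s) ≤
        reachAux M σ G n (projHist h) s := by
  set σ' := liftSched M S' M' hen σ with hσ'
  intro n
  induction n with
  | zero =>
    intro h s hs
    rw [reachAux, reachAux]
    by_cases hG : s ∈ G
    · rw [if_pos (show some s ∈ G.image some by simp [hG]), if_pos hG]
    · rw [if_neg (show ¬ some s ∈ G.image some by simp [hG]), if_neg hG]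
  | succ n ih =>
    intro h s hs
    rw [reachAux, reachAux]
    by_cases hG : s ∈ G
    · rw [if_pos (by simp [hG]), if_pos hG]
    · rw [if_neg (by simp [hG]), if_neg hG]
      refine Finset.sum_le_sum fun a _ => ?_
      rw [liftSched_choice_some M S' M' hen σ h hs a]
      refine mul_le_mul_of_nonneg_left ?_ (σ.choice_nonneg _ _ _)
      rw [Fintype.sum_option]
      rw [reachAux_none M' σ' G hsink n _, mul_zero, zero_add]
      refine Finset.sum_le_sum fun u _ => ?_
      by_cases hu : u ∈ S'
      · rcases hprob s hs u hu a with heq | heq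
        · rw [heq]
          refine mul_le_mul_of_nonneg_left ?_ (prob_nonneg M s a u)
          rw [← projHist_append]
          exact ih (h ++ [(some s, a)]) u hu
        · rw [heq, zero_mul]
          exact mul_nonneg (prob_nonneg M s a u) (reachAux_nonneg M σ G _ _ _)
      · rw [hout s hs u hu a, zero_mul]
        exact mul_nonneg (prob_nonneg M s a u) (reachAux_nonneg M σ G _ _ _)

lemma invAux_le (M : MDP S A) (S' : Finset S) (M' : MDP (Option S) A)
    (hen : ∀ s ∈ S', ∀ a, M'.enabled (some s) a ↔ M.enabled s a)
    (hprob : ∀ s ∈ S', ∀ t ∈ S', ∀ a,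
      M'.prob (some s) a (some t) = M.prob s a t ∨ M'.prob (some s) a (some t) = 0)
    (hout : ∀ s ∈ S', ∀ t, t ∉ S' → ∀ a, M'.prob (some s) a (some t) = 0)
    (σ : Scheduler M) (G : Finset S) :
    ∀ n (h : List (Option S × A)) (s : S), s ∈ S' →
      invAux M' (liftSched M S' M' hen σ) (G.image some) n h (some s) ≤
        invAux M σ G n (projHist h) s := by
  set σ' := liftSched M S' M' hen σ with hσ'
  intro n
  induction n with
  | zero =>
    intro h s hs
    rw [invAux, invAux]
    by_cases hG : s ∈ G
    · rw [if_pos (show some s ∈ G.image some by simp [hG]), if_pos hG]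
    · rw [if_neg (show ¬ some s ∈ G.image some by simp [hG]), if_neg hG]
  | succ n ih =>
    intro h s hs
    rw [invAux, invAux]
    by_cases hG : s ∈ G
    · rw [if_pos (by simp [hG]), if_pos hG]
      refine Finset.sum_le_sum fun a _ => ?_
      rw [liftSched_choice_some M S' M' hen σ h hs a]
      refine mul_le_mul_of_nonneg_left ?_ (σ.choice_nonneg _ _ _)
      rw [Fintype.sum_option]
      rw [invAux_none M' σ' G n _, mul_zero, zero_add]
      refine Finset.sum_le_sum fun u _ => ?_
      by_cases hu : u ∈ S'
      · rcases hprob s hs u hu a with heq | heq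
        · rw [heq]
          refine mul_le_mul_of_nonneg_left ?_ (prob_nonneg M s a u)
          rw [← projHist_append]
          exact ih (h ++ [(some s, a)]) u hu
        · rw [heq, zero_mul]
          exact mul_nonneg (prob_nonneg M s a u) (invAux_nonneg M σ G _ _ _)
      · rw [hout s hs u hu a, zero_mul]
        exact mul_nonneg (prob_nonneg M s a u) (invAux_nonneg M σ G _ _ _)
    · rw [if_neg (show ¬ some s ∈ G.image some by simp [hG]), if_neg hG]

end MDPAux

/-- If every scheduler of a subsystem `M'` of `M` satisfies a positive boolean
combination `Φ` of lower-bounded (strict or non-strict) reachability and invariance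
predicates, then every scheduler of `M` satisfies `Φ`. -/
theorem subsystem_forall_transfer {S A : Type} [Fintype S] [Fintype A] [DecidableEq S]
    (M : MDP S A) (S' : Finset S) (M' : MDP (Option S) A)
    (hsub : MDP.IsSubsystem M S' M') (Φ : MOProp S)
    (h : ∀ σ' : MDP.Scheduler M', MDP.SatSub M' σ' Φ) :
    ∀ σ : MDP.Scheduler M, MDP.Sat M σ Φ := by
  open MDP MDPAux in
  intro σ
  obtain ⟨hinit, hinit', hsink, hen, hprob, hout⟩ := hsub
  set σ' := MDPAux.liftSched M S' M' hen σ with hσ'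
  have hreach : ∀ G : Finset S, prReach M' σ' (G.image some) ≤ prReach M σ G := by
    intro G
    unfold MDP.prReach MDP.prReachFrom
    rw [hinit']
    refine ciSup_mono ⟨1, ?_⟩ fun n => ?_
    · rintro x ⟨n, rfl⟩
      exact reachAux_le_one M σ G n [] M.init
    · have := reachAux_le M S' M' hsink hen hprob hout σ G n [] M.init hinit
      simpa [MDPAux.projHist] using this
  have hinv : ∀ G : Finset S, prInv M' σ' (G.image some) ≤ prInv M σ G := by
    intro G
    unfold MDP.prInv
    rw [hinit']
    refine ciInf_mono ⟨0, ?_⟩ fun n => ?_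
    · rintro x ⟨n, rfl⟩
      exact invAux_nonneg M' σ' (G.image some) n [] (some M.init)
    · have := invAux_le M S' M' hen hprob hout σ G n [] M.init hinit
      simpa [MDPAux.projHist] using this
  have key : ∀ Ψ : MOProp S, MDP.SatSub M' σ' Ψ → MDP.Sat M σ Ψ := by
    intro Ψ
    induction Ψ with
    | reach G lam strict =>
      intro hh
      cases strict <;> simp only [MDP.Sat, MDP.SatSub, if_true, if_false, Bool.false_eq_true,
        cond_false, cond_true] at hh ⊢
      · exact le_trans hh (hreach G)
      · exact lt_of_lt_of_le hh (hreach G)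
    | invar G lam strict =>
      intro hh
      cases strict <;> simp only [MDP.Sat, MDP.SatSub, if_true, if_false, Bool.false_eq_true,
        cond_false, cond_true] at hh ⊢
      · exact le_trans hh (hinv G)
      · exact lt_of_lt_of_le hh (hinv G)
    | conj p q ihp ihq => exact fun hh => ⟨ihp hh.1, ihq hh.2⟩
    | disj p q ihp ihq =>
      intro hh
      rcases hh with h1 | h2
      · exact Or.inl (ihp h1)
      · exact Or.inr (ihq h2)
  exact key Φ (h σ')
end

section
/- Let M be an MDP in reachability form with state set S ∪ F (F absorbing), enabled pairs E, matrices A ∈ ℝ^{E×S} with A((s,a),s') = [s=s'] − P(s,a,s') and T ∈ ℝ^{E×k} with T((s,a),i) = Σ_{s'∈G_i} P(s,a,s') for target sets G_1,…,G_k ⊆ F. Then there exists a scheduler σ with Pr^σ(◇G_i) ≥ λ_i for all i ∈ [k] if and only if there exists y ∈ ℝ^E with y ≥ 0, Aᵀ y ≤ δ_in, and Tᵀ y ≥ λ, where δ_in is the Dirac initial distribution. -/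
open Finset

/-!
A certificate `y` is sound because the memoryless scheduler choosing `a` in `s` with probability
proportional to `y (s, a)` makes each `Pr(◇Gᵢ)` harmonic at the states where `y` has mass;
pairing these equations with the flow inequalities `Aᵀ y ≤ δ_in` bounds `Tᵀ y` by `Pr(◇Gᵢ)`.
Conversely, if no certificate exists, Farkas' lemma yields a nonnegative dual solution `(z, u)`
with `z s_in < ∑ᵢ λᵢ uᵢ`; the dual constraints make `z` an upper bound of
`∑ᵢ uᵢ Pr^σ(◇Gᵢ)` for every scheduler `σ` (by induction on the horizon), so no scheduler meets
all the bounds `λᵢ`.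
-/

section Farkas

variable {ι β : Type*} [Fintype β]

lemma sub_smul_dotProduct_eq (x y w w' : β → ℝ) (d : ℝ) :
    (x - (x ⬝ᵥ w / d) • y) ⬝ᵥ w' = x ⬝ᵥ (w' - (y ⬝ᵥ w' / d) • w) := by
  simp only [sub_dotProduct, dotProduct_sub, smul_dotProduct, dotProduct_smul, smul_eq_mul]
  ring

theorem farkas (t : Finset ι) (v : ι → β → ℝ) (b : β → ℝ) :
    (∃ c : ι → ℝ, (∀ i, 0 ≤ c i) ∧ ∑ i ∈ t, c i • v i = b) ∨
      ∃ w : β → ℝ, (∀ i ∈ t, 0 ≤ v i ⬝ᵥ w) ∧ b ⬝ᵥ w < 0 := by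
  classical
  induction t using Finset.induction_on generalizing v b with
  | empty =>
    by_cases hb : b = 0
    · exact Or.inl ⟨0, fun _ => le_rfl, by simp [hb]⟩
    · refine Or.inr ⟨-b, by simp, ?_⟩
      have : 0 ≤ b ⬝ᵥ b := Finset.sum_nonneg fun j _ => mul_self_nonneg (b j)
      rw [dotProduct_neg, neg_lt_zero]
      exact this.lt_of_ne (Ne.symm (dotProduct_self_eq_zero.not.mpr hb))
  | @insert a s ha ih =>
    rcases ih v b with ⟨c, hc0, hc⟩ | ⟨w, hw, hbw⟩
    · refine Or.inl ⟨Function.update c a 0, fun i => ?_, ?_⟩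
      · rcases eq_or_ne i a with rfl | hi
        · simp
        · simpa [hi] using hc0 i
      · rw [sum_insert ha, Function.update_self, zero_smul, zero_add, ← hc]
        exact sum_congr rfl fun i hi => by rw [Function.update_of_ne (ne_of_mem_of_not_mem hi ha)]
    by_cases hd : 0 ≤ v a ⬝ᵥ w
    · exact Or.inr ⟨w, forall_mem_insert _ _ _ |>.mpr ⟨hd, hw⟩, hbw⟩
    push Not at hd
    set d := v a ⬝ᵥ w
    -- project everything onto the hyperplane `· ⬝ᵥ w = 0` along `v a`, and recurse
    rcases ih (fun i => v i - (v i ⬝ᵥ w / d) • v a) (b - (b ⬝ᵥ w / d) • v a) with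
      ⟨c, hc0, hc⟩ | ⟨w', hw', hbw'⟩
    · set μ := b ⬝ᵥ w / d - ∑ i ∈ s, c i * (v i ⬝ᵥ w / d)
      have hμ : 0 ≤ μ := by
        have hα : 0 < b ⬝ᵥ w / d := div_pos_of_neg_of_neg hbw hd
        have : ∑ i ∈ s, c i * (v i ⬝ᵥ w / d) ≤ 0 := sum_nonpos fun i hi =>
          mul_nonpos_of_nonneg_of_nonpos (hc0 i) (div_nonpos_of_nonneg_of_nonpos (hw i hi) hd.le)
        linarith
      refine Or.inl ⟨Function.update c a μ, fun i => ?_, ?_⟩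
      · rcases eq_or_ne i a with rfl | hi
        · simpa using hμ
        · simpa [hi] using hc0 i
      · rw [sum_insert ha, Function.update_self]
        rw [sum_congr rfl fun i hi => by rw [Function.update_of_ne (ne_of_mem_of_not_mem hi ha)]]
        simp only [smul_sub, sum_sub_distrib, smul_smul, ← sum_smul] at hc
        simp only [μ]
        linear_combination (norm := module) hc
    · refine Or.inr ⟨w' - (v a ⬝ᵥ w' / d) • w,
        forall_mem_insert _ _ _ |>.mpr ⟨?_, fun i hi => ?_⟩, ?_⟩
      · rw [dotProduct_sub, dotProduct_smul, smul_eq_mul, div_mul_cancel₀ _ hd.ne, sub_self]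
      · simpa only [sub_smul_dotProduct_eq] using hw' i hi
      · simpa only [sub_smul_dotProduct_eq] using hbw'

theorem farkas_le [Fintype ι] (t : Finset ι) (v : ι → β → ℝ) (b : β → ℝ) :
    (∃ y : ι → ℝ, (∀ i, 0 ≤ y i) ∧ (∀ i ∉ t, y i = 0) ∧ ∑ i, y i • v i ≤ b) ∨
      ∃ w : β → ℝ, (∀ j, 0 ≤ w j) ∧ (∀ i ∈ t, 0 ≤ v i ⬝ᵥ w) ∧ b ⬝ᵥ w < 0 := by
  classical
  rcases farkas (t.disjSum univ) (Sum.elim v fun j => Pi.single j 1) b with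
    ⟨c, hc0, hc⟩ | ⟨w, hw, hbw⟩
  · refine Or.inl ⟨fun i => if i ∈ t then c (.inl i) else 0, fun i => ?_, fun i hi => if_neg hi, ?_⟩
    · dsimp only; split_ifs <;> simp [hc0]
    · simp only [sum_disjSum, Sum.elim_inl, Sum.elim_inr] at hc
      simp only [ite_smul, zero_smul, sum_ite_mem, univ_inter]
      rw [← hc]
      refine le_add_of_nonneg_right (sum_nonneg fun j _ => ?_)
      exact smul_nonneg (hc0 _) (Pi.single_nonneg.2 zero_le_one)
  · refine Or.inr ⟨w, fun j => ?_, fun i hi => ?_, hbw⟩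
    · simpa using hw (.inr j) (by simp)
    · simpa using hw (.inl i) (by simpa using hi)

end Farkas

namespace MDP

variable {S A : Type} [Fintype S] [Fintype A]

section Prob

variable (M : MDP S A)

lemma prob_nonneg (s : S) (a : A) (t : S) : 0 ≤ M.prob s a t := by
  unfold prob
  cases h : M.trans s a with
  | none => simp
  | some f => simpa using M.nonneg' s a f h t

lemma sum_prob_eq_one {s : S} {a : A} (ha : M.enabled s a) : ∑ t, M.prob s a t = 1 := by
  obtain ⟨f, hf⟩ := Option.isSome_iff_exists.mp ha
  simp [prob, hf, M.sum_one' s a f hf]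

lemma sum_prob_le_one (s : S) (a : A) : ∑ t, M.prob s a t ≤ 1 := by
  by_cases ha : M.enabled s a
  · exact (M.sum_prob_eq_one ha).le
  · simp [prob, Option.not_isSome_iff_eq_none.mp ha]

lemma prob_eq_zero_of_prob_self_eq_one {s : S} {a : A} (ha : M.enabled s a)
    (hs : M.prob s a s = 1) {t : S} (ht : t ≠ s) : M.prob s a t = 0 := by
  classical
  have hrest : ∑ u ∈ univ.erase s, M.prob s a u = 0 := by
    have := M.sum_prob_eq_one ha
    rw [← add_sum_erase _ _ (mem_univ s), hs] at this
    linarith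
  exact (sum_eq_zero_iff_of_nonneg fun u _ => M.prob_nonneg s a u).mp hrest t (by simpa using ht)

end Prob

namespace Scheduler

variable {M : MDP S A}

lemma sum_choice_mul_le (σ : Scheduler M) (h : List (S × A)) (s : S) {x : A → ℝ} {c : ℝ}
    (hx : ∀ a, M.enabled s a → x a ≤ c) : ∑ a, σ.choice h s a * x a ≤ c :=
  calc ∑ a, σ.choice h s a * x a ≤ ∑ a, σ.choice h s a * c := by
        refine sum_le_sum fun a _ => ?_
        by_cases hσ : σ.choice h s a = 0
        · simp [hσ]
        · exact mul_le_mul_of_nonneg_left (hx a (σ.choice_support h s a hσ)) (σ.choice_nonneg h s a)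
    _ = c := by rw [← sum_mul, σ.choice_sum_one, one_mul]

def IsMemoryless (σ : Scheduler M) : Prop := ∀ h s a, σ.choice h s a = σ.choice [] s a

open Classical in
noncomputable def ofWeights (y : S × A → ℝ) (hy0 : ∀ p, 0 ≤ y p)
    (hen : ∀ p : S × A, ¬ M.enabled p.1 p.2 → y p = 0) : Scheduler M where
  choice _ s a := if 0 < ∑ b, y (s, b) then y (s, a) / ∑ b, y (s, b)
    else if a = Classical.choose (M.exists_enabled s) then 1 else 0
  choice_nonneg _ s a := by
    split_ifs <;> first | positivity | exact div_nonneg (hy0 _) (sum_nonneg fun b _ => hy0 _)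
  choice_sum_one _ s := by
    split_ifs with hpos
    · rw [← sum_div, div_self hpos.ne']
    · simp
  choice_support _ s a hσ := by
    split_ifs at hσ with hpos ha
    · by_contra hna
      simp [hen (s, a) hna] at hσ
    · exact ha ▸ Classical.choose_spec (M.exists_enabled s)
    · simp at hσ

variable (y : S × A → ℝ) (hy0 : ∀ p, 0 ≤ y p) (hen : ∀ p : S × A, ¬ M.enabled p.1 p.2 → y p = 0)

lemma isMemoryless_ofWeights : (ofWeights y hy0 hen).IsMemoryless := fun _ _ _ => rfl

lemma sum_mul_choice_ofWeights (h : List (S × A)) (s : S) (a : A) :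
    (∑ b, y (s, b)) * (ofWeights y hy0 hen).choice h s a = y (s, a) := by
  by_cases hpos : 0 < ∑ b, y (s, b)
  · simp only [ofWeights, if_pos hpos]
    field_simp
  · have hY : ∑ b, y (s, b) = 0 := le_antisymm (not_lt.mp hpos) (sum_nonneg fun b _ => hy0 (s, b))
    rw [hY, zero_mul, (sum_eq_zero_iff_of_nonneg fun b _ => hy0 (s, b)).mp hY a (mem_univ a)]

end Scheduler

variable [DecidableEq S] {M : MDP S A}

section Reach

variable (σ : Scheduler M) (G : Finset S)

lemma reachAux_of_mem (n : ℕ) (h : List (S × A)) {s : S} (hs : s ∈ G) :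
    reachAux M σ G n h s = 1 := by
  cases n <;> simp [reachAux, hs]

lemma reachAux_succ_of_notMem (n : ℕ) (h : List (S × A)) {s : S} (hs : s ∉ G) :
    reachAux M σ G (n + 1) h s =
      ∑ a, σ.choice h s a * ∑ t, M.prob s a t * reachAux M σ G n (h ++ [(s, a)]) t := by
  simp [reachAux, hs]

lemma reachAux_nonneg (n : ℕ) : ∀ h s, 0 ≤ reachAux M σ G n h s := by
  induction n with
  | zero => intro h s; unfold reachAux; positivity
  | succ n ih =>
    intro h s
    by_cases hs : s ∈ G
    · simp [reachAux_of_mem σ G _ h hs]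
    rw [reachAux_succ_of_notMem σ G n h hs]
    exact sum_nonneg fun a _ => mul_nonneg (σ.choice_nonneg h s a) <|
      sum_nonneg fun t _ => mul_nonneg (M.prob_nonneg s a t) (ih _ t)

lemma reachAux_le_one (n : ℕ) : ∀ h s, reachAux M σ G n h s ≤ 1 := by
  induction n with
  | zero => intro h s; unfold reachAux; split <;> norm_num
  | succ n ih =>
    intro h s
    by_cases hs : s ∈ G
    · simp [reachAux_of_mem σ G _ h hs]
    rw [reachAux_succ_of_notMem σ G n h hs]
    refine σ.sum_choice_mul_le h s fun a _ => ?_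
    calc ∑ t, M.prob s a t * reachAux M σ G n (h ++ [(s, a)]) t ≤ ∑ t, M.prob s a t :=
          sum_le_sum fun t _ => mul_le_of_le_one_right (M.prob_nonneg s a t) (ih _ t)
      _ ≤ 1 := M.sum_prob_le_one s a

lemma reachAux_le_succ (n : ℕ) : ∀ h s, reachAux M σ G n h s ≤ reachAux M σ G (n + 1) h s := by
  induction n with
  | zero =>
    intro h s
    by_cases hs : s ∈ G
    · simp [reachAux, hs]
    · simpa [reachAux, hs] using reachAux_nonneg σ G 1 h s
  | succ n ih =>
    intro h s
    by_cases hs : s ∈ G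
    · simp [reachAux_of_mem σ G _ h hs]
    rw [reachAux_succ_of_notMem σ G _ h hs, reachAux_succ_of_notMem σ G _ h hs]
    exact sum_le_sum fun a _ => mul_le_mul_of_nonneg_left
      (sum_le_sum fun t _ => mul_le_mul_of_nonneg_left (ih _ t) (M.prob_nonneg s a t))
      (σ.choice_nonneg h s a)

lemma reachAux_eq_indicator {F : Finset S} (habs : ∀ s ∈ F, ∀ a, M.enabled s a → M.prob s a s = 1)
    {s : S} (hs : s ∈ F) (n : ℕ) (h : List (S × A)) :
    reachAux M σ G n h s = if s ∈ G then 1 else 0 := by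
  by_cases hsG : s ∈ G
  · simp [reachAux_of_mem σ G n h hsG, hsG]
  rw [if_neg hsG]
  induction n generalizing h with
  | zero => simp [reachAux, hsG]
  | succ n ih =>
    rw [reachAux_succ_of_notMem σ G n h hsG]
    refine sum_eq_zero fun a _ => ?_
    by_cases hσ : σ.choice h s a = 0
    · simp [hσ]
    have ha := σ.choice_support h s a hσ
    rw [sum_eq_single s (fun t _ ht => by
      rw [M.prob_eq_zero_of_prob_self_eq_one ha (habs s hs a ha) ht, zero_mul]) (by simp), ih]
    simp

lemma tendsto_reachAux (s : S) :
    Filter.Tendsto (fun n => reachAux M σ G n [] s) Filter.atTop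
      (nhds (prReachFrom M σ G s)) :=
  tendsto_atTop_ciSup (monotone_nat_of_le_succ fun n => reachAux_le_succ σ G n [] s)
    ⟨1, Set.forall_mem_range.mpr fun n => reachAux_le_one σ G n [] s⟩

lemma prReachFrom_nonneg (s : S) : 0 ≤ prReachFrom M σ G s :=
  ge_of_tendsto' (tendsto_reachAux σ G s) fun n => reachAux_nonneg σ G n [] s

lemma prReachFrom_eq_indicator {F : Finset S}
    (habs : ∀ s ∈ F, ∀ a, M.enabled s a → M.prob s a s = 1) {s : S} (hs : s ∈ F) :
    prReachFrom M σ G s = if s ∈ G then 1 else 0 := by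
  simp [prReachFrom, reachAux_eq_indicator σ G habs hs]

lemma reachAux_eq_of_isMemoryless (hσ : σ.IsMemoryless) (n : ℕ) :
    ∀ h s, reachAux M σ G n h s = reachAux M σ G n [] s := by
  induction n with
  | zero => intro h s; rfl
  | succ n ih =>
    intro h s
    by_cases hs : s ∈ G
    · simp [reachAux_of_mem σ G _ _ hs]
    simp only [reachAux_succ_of_notMem σ G n _ hs, hσ h s, ih (h ++ _), ih ([] ++ _)]

lemma prReachFrom_eq_of_isMemoryless (hσ : σ.IsMemoryless) {s : S} (hs : s ∉ G) :
    prReachFrom M σ G s = ∑ a, σ.choice [] s a * ∑ t, M.prob s a t * prReachFrom M σ G t := by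
  refine tendsto_nhds_unique ((tendsto_reachAux σ G s).comp (Filter.tendsto_add_atTop_nat 1)) ?_
  have hstep : (fun n => reachAux M σ G (n + 1) [] s) =
      fun n => ∑ a, σ.choice [] s a * ∑ t, M.prob s a t * reachAux M σ G n [] t := by
    funext n
    simp only [reachAux_succ_of_notMem σ G n _ hs, reachAux_eq_of_isMemoryless σ G hσ n ([] ++ _)]
  rw [Function.comp_def, hstep]
  exact tendsto_finsetSum _ fun a _ => (tendsto_finsetSum _ fun t _ =>
    (tendsto_reachAux σ G t).const_mul _).const_mul _

end Reach

/-- `y ≥ 0` supported on `E`, with `Aᵀ y ≤ δ_in` and `Tᵀ y ≥ lam`. -/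
def IsReachCertificate (M : MDP S A) (F : Finset S) {k : ℕ} (G : Fin k → Finset S)
    (lam : Fin k → ℝ) (y : S × A → ℝ) : Prop :=
  (∀ p, 0 ≤ y p) ∧
  (∀ p : S × A, p.1 ∈ F ∨ ¬ M.enabled p.1 p.2 → y p = 0) ∧
  (∀ s, s ∉ F →
    ∑ p : S × A, ((if p.1 = s then (1 : ℝ) else 0) - M.prob p.1 p.2 s) * y p
      ≤ (if s = M.init then 1 else 0)) ∧
  (∀ i, lam i ≤ ∑ p : S × A, (∑ t ∈ G i, M.prob p.1 p.2 t) * y p)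

lemma sum_flow_mul_eq (y : S × A → ℝ) (s : S) :
    ∑ p : S × A, ((if p.1 = s then (1 : ℝ) else 0) - M.prob p.1 p.2 s) * y p =
      ∑ a, y (s, a) - ∑ p : S × A, M.prob p.1 p.2 s * y p := by
  simp only [sub_mul, sum_sub_distrib, ite_mul, one_mul, zero_mul, sub_left_inj]
  rw [Fintype.sum_prod_type, sum_eq_single s (fun x _ hx => by simp [hx]) (by simp)]
  simp

lemma sum_prob_mul_le_of_harmonic {F G : Finset S} (hGF : G ⊆ F) (hinit : M.init ∉ F)
    {y : S × A → ℝ} (hyF : ∀ p : S × A, p.1 ∈ F → y p = 0)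
    (hflow : ∀ s, s ∉ F →
      ∑ p : S × A, ((if p.1 = s then (1 : ℝ) else 0) - M.prob p.1 p.2 s) * y p
        ≤ (if s = M.init then 1 else 0))
    {V : S → ℝ} (hV0 : ∀ s, 0 ≤ V s) (hVF : ∀ s ∈ F, V s = if s ∈ G then 1 else 0)
    (hharm : ∀ s, ∑ a, y (s, a) * ∑ t, M.prob s a t * V t = (∑ a, y (s, a)) * V s) :
    ∑ p : S × A, (∑ t ∈ G, M.prob p.1 p.2 t) * y p ≤ V M.init := by
  set Y : S → ℝ := fun s => ∑ a, y (s, a)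
  set inflow : S → ℝ := fun t => ∑ p : S × A, M.prob p.1 p.2 t * y p
  have hbalance : ∑ s, Y s * V s = ∑ t, inflow t * V t := by
    calc ∑ s, Y s * V s = ∑ p : S × A, y p * ∑ t, M.prob p.1 p.2 t * V t := by
          rw [Fintype.sum_prod_type]
          exact sum_congr rfl fun s _ => (hharm s).symm
      _ = ∑ t, inflow t * V t := by
          simp only [inflow, mul_sum, sum_mul]
          rw [sum_comm]
          exact sum_congr rfl fun _ _ => sum_congr rfl fun _ _ => by ring
  have htarget : ∑ t ∈ F, inflow t * V t = ∑ p : S × A, (∑ t ∈ G, M.prob p.1 p.2 t) * y p := by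
    rw [sum_congr rfl fun t ht => by rw [hVF t ht, mul_ite, mul_one, mul_zero], sum_ite_mem,
      inter_eq_right.mpr hGF]
    simp only [inflow, sum_mul]
    exact sum_comm
  have hYF : ∑ t ∈ F, Y t * V t = 0 :=
    sum_eq_zero fun t ht => by simp [Y, hyF (t, _) ht]
  have hVinit : ∑ t ∈ Fᶜ, (if t = M.init then 1 else 0) * V t = V M.init := by
    simp [hinit]
  have htransient : ∑ t ∈ Fᶜ, (Y t - if t = M.init then 1 else 0) * V t ≤
      ∑ t ∈ Fᶜ, inflow t * V t := by
    refine sum_le_sum fun t ht => mul_le_mul_of_nonneg_right ?_ (hV0 t)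
    have := hflow t (mem_compl.mp ht)
    rw [sum_flow_mul_eq] at this
    linarith
  simp only [sub_mul, sum_sub_distrib, hVinit] at htransient
  linarith [sum_add_sum_compl F fun t => inflow t * V t, sum_add_sum_compl F fun t => Y t * V t]

theorem exists_scheduler_of_isReachCertificate {F : Finset S}
    (habs : ∀ s ∈ F, ∀ a, M.enabled s a → M.prob s a s = 1) (hinit : M.init ∉ F)
    {k : ℕ} {G : Fin k → Finset S} (hG : ∀ i, G i ⊆ F) {lam : Fin k → ℝ} {y : S × A → ℝ}
    (hy : IsReachCertificate M F G lam y) :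
    ∃ σ : Scheduler M, ∀ i, lam i ≤ prReach M σ (G i) := by
  obtain ⟨hy0, hsupp, hflow, hT⟩ := hy
  have hen : ∀ p : S × A, ¬ M.enabled p.1 p.2 → y p = 0 := fun p hp => hsupp p (.inr hp)
  set σ := Scheduler.ofWeights y hy0 hen
  have hharm : ∀ i s, ∑ a, y (s, a) * ∑ t, M.prob s a t * prReachFrom M σ (G i) t =
      (∑ a, y (s, a)) * prReachFrom M σ (G i) s := by
    intro i s
    by_cases hs : s ∈ G i
    · simp [hsupp (s, _) (.inl (hG i hs))]
    rw [prReachFrom_eq_of_isMemoryless σ _ (Scheduler.isMemoryless_ofWeights y hy0 hen) hs, mul_sum]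
    refine sum_congr rfl fun a _ => ?_
    rw [← Scheduler.sum_mul_choice_ofWeights y hy0 hen [] s a]
    ring
  exact ⟨σ, fun i => (hT i).trans <| sum_prob_mul_le_of_harmonic (hG i) hinit
    (fun p hp => hsupp p (.inl hp)) hflow (prReachFrom_nonneg σ _)
    (fun s hs => prReachFrom_eq_indicator σ _ habs hs) (hharm i)⟩

/-- The dual of the linear program whose feasible points are the certificates. -/
def IsDualFeasible (M : MDP S A) (F : Finset S) {k : ℕ} (G : Fin k → Finset S) (z : S → ℝ)
    (u : Fin k → ℝ) : Prop :=
  (∀ s, 0 ≤ z s) ∧ (∀ i, 0 ≤ u i) ∧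
  ∀ p : S × A, p.1 ∉ F → M.enabled p.1 p.2 →
    ∑ i, u i * ∑ t ∈ G i, M.prob p.1 p.2 t + ∑ t, M.prob p.1 p.2 t * z t ≤ z p.1

lemma sum_mul_reachAux_le {F : Finset S} (habs : ∀ s ∈ F, ∀ a, M.enabled s a → M.prob s a s = 1)
    {k : ℕ} {G : Fin k → Finset S} (hG : ∀ i, G i ⊆ F) (σ : Scheduler M) {z : S → ℝ}
    {u : Fin k → ℝ} (hzu : IsDualFeasible M F G z u)
    (n : ℕ) : ∀ h s, s ∉ F → ∑ i, u i * reachAux M σ (G i) n h s ≤ z s := by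
  obtain ⟨hz, hu, hdual⟩ := hzu
  induction n with
  | zero =>
    intro h s hs
    simpa [reachAux, fun i => mt (@hG i s) hs] using hz s
  | succ n ih =>
    intro h s hs
    have hbound : ∀ h' t, ∑ i, u i * reachAux M σ (G i) n h' t ≤
        ∑ i, u i * (if t ∈ G i then 1 else 0) + z t := by
      intro h' t
      by_cases ht : t ∈ F
      · simp only [reachAux_eq_indicator σ _ habs ht]
        linarith [hz t]
      · have : 0 ≤ ∑ i, u i * (if t ∈ G i then 1 else 0) :=
          sum_nonneg fun i _ => mul_nonneg (hu i) (by split_ifs <;> norm_num)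
        linarith [ih h' t ht]
    calc ∑ i, u i * reachAux M σ (G i) (n + 1) h s
        = ∑ a, σ.choice h s a *
            ∑ t, M.prob s a t * ∑ i, u i * reachAux M σ (G i) n (h ++ [(s, a)]) t := by
          simp only [reachAux_succ_of_notMem σ _ n h (mt (@hG _ s) hs), mul_sum]
          rw [sum_comm]
          refine sum_congr rfl fun a _ => ?_
          rw [sum_comm]
          exact sum_congr rfl fun t _ => sum_congr rfl fun i _ => by ring
      _ ≤ z s := σ.sum_choice_mul_le h s fun a ha => calc
          ∑ t, M.prob s a t * ∑ i, u i * reachAux M σ (G i) n (h ++ [(s, a)]) t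
            ≤ ∑ t, M.prob s a t * (∑ i, u i * (if t ∈ G i then 1 else 0) + z t) :=
              sum_le_sum fun t _ => mul_le_mul_of_nonneg_left (hbound _ t) (M.prob_nonneg s a t)
          _ = ∑ i, u i * ∑ t ∈ G i, M.prob s a t + ∑ t, M.prob s a t * z t := by
              simp only [mul_add, sum_add_distrib, add_left_inj, mul_sum]
              rw [sum_comm]
              refine sum_congr rfl fun i _ => ?_
              simp only [mul_ite, mul_one, mul_zero, sum_ite_mem, univ_inter]
              exact sum_congr rfl fun t _ => mul_comm _ _
          _ ≤ z s := hdual (s, a) hs ha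

lemma sum_mul_prReachFrom_le {F : Finset S}
    (habs : ∀ s ∈ F, ∀ a, M.enabled s a → M.prob s a s = 1)
    {k : ℕ} {G : Fin k → Finset S} (hG : ∀ i, G i ⊆ F) (σ : Scheduler M) {z : S → ℝ}
    {u : Fin k → ℝ} (hzu : IsDualFeasible M F G z u)
    {s : S} (hs : s ∉ F) : ∑ i, u i * prReachFrom M σ (G i) s ≤ z s :=
  le_of_tendsto' (tendsto_finsetSum _ fun i _ => (tendsto_reachAux σ (G i) s).const_mul (u i))
    fun n => sum_mul_reachAux_le habs hG σ hzu n [] s hs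

lemma exists_isReachCertificate_or_exists_dual (M : MDP S A) (F : Finset S) {k : ℕ}
    (G : Fin k → Finset S) (lam : Fin k → ℝ) :
    (∃ y, IsReachCertificate M F G lam y) ∨
      ∃ (z : S → ℝ) (u : Fin k → ℝ), IsDualFeasible M F G z u ∧ z M.init < ∑ i, lam i * u i := by
  classical
  rcases farkas_le (univ.filter fun p : S × A => p.1 ∉ F ∧ M.enabled p.1 p.2)
    (fun p => Sum.elim (fun s => (if p.1 = s then 1 else 0) - M.prob p.1 p.2 s)
      fun i => -∑ t ∈ G i, M.prob p.1 p.2 t)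
    (Sum.elim (fun s => if s = M.init then 1 else 0) (-lam)) with
    ⟨y, hy0, hsupp, hle⟩ | ⟨w, hw0, hw, hbw⟩
  · refine .inl ⟨y, hy0, fun p hp => hsupp p ?_, fun s _ => ?_, fun i => ?_⟩
    · simpa [or_iff_not_and_not] using hp
    · simpa [Finset.sum_apply, mul_comm] using hle (.inl s)
    · simpa [Finset.sum_apply, mul_comm] using hle (.inr i)
  · refine .inr ⟨fun s => w (.inl s), fun i => w (.inr i),
      ⟨fun s => hw0 _, fun i => hw0 _, fun p hpF hpe => ?_⟩, ?_⟩
    · have := hw p (by simp [hpF, hpe])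
      simp [dotProduct, sub_mul, sum_sub_distrib] at this
      dsimp only
      rw [sum_congr rfl fun i _ => mul_comm (w (.inr i)) _]
      linarith
    · simp [dotProduct, mul_comm] at hbw
      linarith

end MDP

theorem exists_conj_reach_certificates_general {S A : Type} [Fintype S] [Fintype A] [DecidableEq S]
    (M : MDP S A) (F : Finset S)
    (habs : ∀ s ∈ F, ∀ a, M.enabled s a → M.prob s a s = 1)
    (hinit : M.init ∉ F)
    {k : ℕ} (G : Fin k → Finset S) (hG : ∀ i, G i ⊆ F) (lam : Fin k → ℝ) :
    (∃ σ : MDP.Scheduler M, ∀ i, lam i ≤ MDP.prReach M σ (G i)) ↔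
      ∃ y : S × A → ℝ,
        (∀ p, 0 ≤ y p) ∧
        (∀ p : S × A, p.1 ∈ F ∨ ¬ M.enabled p.1 p.2 → y p = 0) ∧
        (∀ s, s ∉ F →
          ∑ p : S × A, ((if p.1 = s then (1 : ℝ) else 0) - M.prob p.1 p.2 s) * y p
            ≤ (if s = M.init then 1 else 0)) ∧
        (∀ i, lam i ≤ ∑ p : S × A, (∑ t ∈ G i, M.prob p.1 p.2 t) * y p) := by
  refine ⟨fun ⟨σ, hσ⟩ => ?_, fun ⟨y, hy⟩ =>
    MDP.exists_scheduler_of_isReachCertificate habs hinit hG hy⟩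
  refine (MDP.exists_isReachCertificate_or_exists_dual M F G lam).resolve_right ?_
  rintro ⟨z, u, hzu, hlt⟩
  have hlam : ∑ i, lam i * u i ≤ ∑ i, u i * MDP.prReach M σ (G i) :=
    sum_le_sum fun i _ => by rw [mul_comm]; exact mul_le_mul_of_nonneg_left (hσ i) (hzu.2.1 i)
  exact hlt.not_ge (hlam.trans (MDP.sum_mul_prReachFrom_le habs hG σ hzu hinit))

/-- Farkas certificates for existentially quantified conjunctive reachability queries
(inequality form): `∃σ. ⋀ᵢ Pr^σ(◇Gᵢ) ≥ λᵢ` iff `∃ y ≥ 0` supported on the enabled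
non-target pairs `E` with `Aᵀ y ≤ δ_in` and `Tᵀ y ≥ λ`. -/
theorem exists_conj_reach_certificates {S A : Type} [Fintype S] [Fintype A] [DecidableEq S]
    (M : MDP S A) (F : Finset S)
    (habs : ∀ s ∈ F, ∀ a, M.enabled s a → M.prob s a s = 1)
    (hform : ∀ s, ∃ σ : MDP.Scheduler M, 0 < MDP.prReachFrom M σ F s)
    (hinit : M.init ∉ F)
    {k : ℕ} (G : Fin k → Finset S) (hG : ∀ i, G i ⊆ F) (lam : Fin k → ℝ) :
    (∃ σ : MDP.Scheduler M, ∀ i, lam i ≤ MDP.prReach M σ (G i)) ↔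
      ∃ y : S × A → ℝ,
        (∀ p, 0 ≤ y p) ∧
        (∀ p : S × A, p.1 ∈ F ∨ ¬ M.enabled p.1 p.2 → y p = 0) ∧
        (∀ s, s ∉ F →
          ∑ p : S × A, ((if p.1 = s then (1 : ℝ) else 0) - M.prob p.1 p.2 s) * y p
            ≤ (if s = M.init then 1 else 0)) ∧
        (∀ i, lam i ≤ ∑ p : S × A, (∑ t ∈ G i, M.prob p.1 p.2 t) * y p) :=
  exists_conj_reach_certificates_general M F habs hinit G hG lam
end
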